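/- If μ is a probability measure on ℕ with mean 1 - D < 1 (D > 0), then Σ_{m≥1} μ^{*m}(m-1) = 1/D; equivalently, the probability measure m ↦ m^{-1}·μ^{*m}(m-1) on ℕ* has mean 1/D. -/

import Mathlib

/-!
Read `μ` as the law of `X + 1`, where `X ≥ -1` is the step of a skip-free walk `W` started at `0`,
and let `T` be its hitting time of `-1` (the total progeny of the Galton–Watson tree). By the cycle
lemma exactly one cyclic rotation of an `(m + 1)`-step path from `0` to `-1` first hits `-1` at its
last step, which is Kemperman's formula `μ^{*(m+1)}(m) = (m + 1) P(T = m + 1)`; so the sum is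
`E[T] = ∑_J P(T > J)`. Wald's identity for the stopped walk reads
`E[W_J; T > J] + P(T > J) + D ∑_{j < J} P(T > j) = 1`, hence `D E[T] ≤ 1`. Conversely the height
term vanishes in the limit: it is at most `∑_{i < J} E[X_i + 1; T > J]`, where a late step `i`
contributes at most `(1 - D) P(T > i)` (summable since `E[T] < ∞`), and an early step, truncated
at a level `M`, at most `M P(T > J)` plus a tail of the mean of `μ`.
-/

/-- Convolution of two sequences. -/
def conv (f g : ℕ → ℝ) (n : ℕ) : ℝ := ∑ k ∈ Finset.range (n + 1), f k * g (n - k)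

/-- `convPow f m` is the `m`-th convolution power of `f` (with `convPow f 0 = δ_0`). -/
def convPow (f : ℕ → ℝ) : ℕ → ℕ → ℝ
  | 0, n => if n = 0 then 1 else 0
  | m + 1, n => conv f (convPow f m) n

open scoped ENNReal Classical
open Filter Topology Finset

namespace ENNReal

lemma tsum_tsum_add_eq_tsum_succ_mul (a : ℕ → ℝ≥0∞) :
    ∑' (j : ℕ) (k : ℕ), a (j + k) = ∑' n : ℕ, (n + 1) * a n := by
  rw [← ENNReal.tsum_prod, ← HasAntidiagonal.sigmaAntidiagonalEquivProd.tsum_eq,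
    ENNReal.tsum_sigma']
  refine tsum_congr fun n ↦ ?_
  rw [tsum_fintype,
    Fintype.sum_congr _ (fun _ ↦ a n) fun b ↦ congrArg a (mem_antidiagonal.mp b.2)]
  simp

lemma eq_tsum_of_eq_add_succ {u v : ℕ → ℝ≥0∞} (huv : ∀ n, u n = u (n + 1) + v n)
    (hu : Tendsto u atTop (𝓝 0)) (n : ℕ) : u n = ∑' k, v (n + k) := by
  have hpartial (N : ℕ) : u n = u (n + N) + ∑ k ∈ range N, v (n + k) := by
    induction N with
    | zero => simp
    | succ N ih => rw [ih, huv (n + N), sum_range_succ, add_assoc, add_comm (v _)]; rfl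
  have hlim : Tendsto (fun N ↦ u (n + N) + ∑ k ∈ range N, v (n + k)) atTop
      (𝓝 (0 + ∑' k, v (n + k))) :=
    ((hu.comp (tendsto_add_atTop_nat n)).congr fun N ↦ by simp [add_comm]).add
      (ENNReal.tendsto_nat_tsum _)
  rw [zero_add] at hlim
  exact tendsto_nhds_unique (tendsto_const_nhds.congr hpartial) hlim

lemma tsum_ite_le_eq_tsum_add (F : ℕ → ℝ≥0∞) (M : ℕ) :
    ∑' x, (if M ≤ x then F x else 0) = ∑' k, F (k + M) := by
  rw [← (add_left_injective M).tsum_eq fun x hx ↦ ⟨x - M, by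
    have : M ≤ x := by by_contra h; exact hx (if_neg h)
    simp only; omega⟩]
  simp

end ENNReal

lemma convPow_nonneg {μ : ℕ → ℝ} (hμ : ∀ a, 0 ≤ μ a) : ∀ m n, 0 ≤ convPow μ m n
  | 0, n => by unfold convPow; positivity
  | m + 1, n => by
    simp only [convPow, conv]
    exact sum_nonneg fun k _ ↦ mul_nonneg (hμ k) (convPow_nonneg hμ m (n - k))

namespace SkipFreeWalk

variable {n : ℕ}

section Tuples

variable (ν : ℕ → ℝ≥0∞)

noncomputable def weight (f : Fin n → ℕ) : ℝ≥0∞ := ∏ i, ν (f i)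

lemma weight_snoc (g : Fin n → ℕ) (x : ℕ) : weight ν (Fin.snoc g x) = weight ν g * ν x := by
  simp [weight, Fin.prod_univ_castSucc]

lemma weight_cons (x : ℕ) (g : Fin n → ℕ) : weight ν (Fin.cons x g) = ν x * weight ν g := by
  simp [weight, Fin.prod_univ_succ]

lemma tsum_snoc (φ : (Fin (n + 1) → ℕ) → ℝ≥0∞) :
    ∑' f, φ f = ∑' (g : Fin n → ℕ) (x : ℕ), φ (Fin.snoc g x) := by
  rw [← (Fin.snocEquiv fun _ ↦ ℕ).tsum_eq, ENNReal.tsum_prod', ENNReal.tsum_comm]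
  rfl

lemma tsum_cons (φ : (Fin (n + 1) → ℕ) → ℝ≥0∞) :
    ∑' f, φ f = ∑' (x : ℕ) (g : Fin n → ℕ), φ (Fin.cons x g) := by
  rw [← (Fin.consEquiv fun _ ↦ ℕ).tsum_eq, ENNReal.tsum_prod']
  rfl

variable {ν}

lemma tsum_weight (hν : ∑' k, ν k = 1) : ∀ n, ∑' f : Fin n → ℕ, weight ν f = 1
  | 0 => by simp [weight]
  | n + 1 => by
    simp only [tsum_snoc, weight_snoc, ENNReal.tsum_mul_left, hν, mul_one, tsum_weight hν n]

lemma tsum_weight_mul_apply (hν : ∑' k, ν k = 1) (i : Fin n) (φ : ℕ → ℝ≥0∞) :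
    ∑' f : Fin n → ℕ, weight ν f * φ (f i) = ∑' x, ν x * φ x := by
  obtain ⟨m, rfl⟩ : ∃ m, n = m + 1 := ⟨n - 1, by have := i.pos; omega⟩
  have hw (x : ℕ) (g : Fin m → ℕ) : weight ν (Fin.insertNth i x g) = ν x * weight ν g := by
    simp [weight, Fin.prod_univ_succAbove _ i]
  rw [← (Fin.insertNthEquiv (fun _ ↦ ℕ) i).tsum_eq, ENNReal.tsum_prod']
  change ∑' (x : ℕ) (g : Fin m → ℕ),
    weight ν (Fin.insertNth (α := fun _ ↦ ℕ) i x g) * φ (Fin.insertNth (α := fun _ ↦ ℕ) i x g i) = _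
  simp only [Fin.insertNth_apply_same, hw, mul_right_comm _ _ (φ _), ENNReal.tsum_mul_left,
    tsum_weight hν, mul_one]

end Tuples

lemma ofReal_convPow {μ : ℕ → ℝ} (hμ : ∀ a, 0 ≤ μ a) : ∀ m n,
    ENNReal.ofReal (convPow μ m n) =
      ∑' f : Fin m → ℕ, if ∑ i, f i = n then weight (fun k ↦ ENNReal.ofReal (μ k)) f else 0
  | 0, n => by
    rw [tsum_fintype, Fintype.sum_unique]
    by_cases h : n = 0 <;> simp [convPow, weight, h, eq_comm]
  | m + 1, n => by
    have hterm (x : ℕ) : ∑' g : Fin m → ℕ, (if ∑ i, Fin.cons (α := fun _ ↦ ℕ) x g i = n then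
        weight (fun k ↦ ENNReal.ofReal (μ k)) (Fin.cons x g) else 0) =
        if x < n + 1 then ENNReal.ofReal (μ x * convPow μ m (n - x)) else 0 := by
      split_ifs with hx
      · rw [ENNReal.ofReal_mul (hμ x), ofReal_convPow hμ m, ← ENNReal.tsum_mul_left]
        refine tsum_congr fun g ↦ ?_
        have hsum : x + ∑ i, g i = n ↔ ∑ i, g i = n - x := by omega
        simp only [Fin.sum_cons, weight_cons, hsum, mul_ite, mul_zero]
      · refine ENNReal.tsum_eq_zero.mpr fun g ↦ if_neg ?_
        rw [Fin.sum_cons]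
        omega
    simp only [convPow, conv, tsum_cons, hterm]
    rw [tsum_eq_sum (s := range (n + 1)) (fun x hx ↦ if_neg (by simpa using hx)),
      ENNReal.ofReal_sum_of_nonneg (fun k _ ↦ mul_nonneg (hμ k) (convPow_nonneg hμ m _))]
    exact sum_congr rfl fun x hx ↦ (if_pos (by simpa using hx)).symm

section Paths

/-- A path `f : Fin n → ℕ` encodes the skip-free walk `t ↦ partialSum f t - t`, with steps
`f i - 1 ≥ -1`. -/
def partialSum (f : Fin n → ℕ) (t : ℕ) : ℕ := ∑ i : Fin n, if (i : ℕ) < t then f i else 0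

def StaysNonneg (f : Fin n → ℕ) : Prop := ∀ t ≤ n, t ≤ partialSum f t

def IsFirstPassage (f : Fin n → ℕ) : Prop :=
  (∀ t < n, t ≤ partialSum f t) ∧ partialSum f n + 1 = n

lemma partialSum_self (f : Fin n → ℕ) : partialSum f n = ∑ i, f i := by
  simp [partialSum]

lemma partialSum_snoc_of_le (g : Fin n → ℕ) (x : ℕ) {t : ℕ} (ht : t ≤ n) :
    partialSum (Fin.snoc g x) t = partialSum g t := by
  simp [partialSum, Fin.sum_univ_castSucc, ht.not_gt]

lemma partialSum_snoc_succ (g : Fin n → ℕ) (x : ℕ) :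
    partialSum (Fin.snoc g x) (n + 1) = partialSum g n + x := by
  simp [partialSum, Fin.sum_univ_castSucc]

lemma staysNonneg_snoc_iff (g : Fin n → ℕ) (x : ℕ) :
    StaysNonneg (Fin.snoc g x) ↔ StaysNonneg g ∧ n + 1 ≤ partialSum g n + x := by
  refine ⟨fun h ↦ ⟨fun t ht ↦ ?_, ?_⟩, fun ⟨hg, hx⟩ t ht ↦ ?_⟩
  · simpa [partialSum_snoc_of_le g x ht] using h t (by omega)
  · simpa [partialSum_snoc_succ] using h (n + 1) le_rfl
  · obtain ht | rfl : t ≤ n ∨ t = n + 1 := by omega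
    · simpa [partialSum_snoc_of_le g x ht] using hg t ht
    · simpa [partialSum_snoc_succ] using hx

lemma isFirstPassage_snoc_iff (g : Fin n → ℕ) (x : ℕ) :
    IsFirstPassage (Fin.snoc g x) ↔ StaysNonneg g ∧ partialSum g n + x = n := by
  simp only [IsFirstPassage, StaysNonneg, partialSum_snoc_succ, Nat.lt_succ_iff]
  refine and_congr (forall₂_congr fun t ht ↦ ?_) (by omega)
  rw [partialSum_snoc_of_le g x ht]

end Paths

section Cycle

theorem cycle_lemma (s : ℕ → ℤ) (hn : 0 < n) (hs : ∀ t, s (t + n) = s t - 1) :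
    ∃! j, j < n ∧ ∀ t < n, s j ≤ s (j + t) := by
  have hmin : ∃ j, j < n ∧ ∀ v < n, s j ≤ s v := by
    obtain ⟨j, hj, hjmin⟩ := (range n).exists_min_image s ⟨0, by simpa⟩
    exact ⟨j, by simpa using hj, fun v hv ↦ hjmin v (by simpa using hv)⟩
  -- the first minimiser of `s` on `[0, n)`; its strictness on `[0, j)` handles the wrap-around
  set j := Nat.find hmin
  obtain ⟨hjn, hjmin⟩ : j < n ∧ ∀ v < n, s j ≤ s v := Nat.find_spec hmin
  have hstrict (v : ℕ) (hv : v < j) : s j < s v := by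
    have := Nat.find_min hmin hv
    push Not at this
    obtain ⟨w, hw, hlt⟩ := this (by omega)
    exact (hjmin w hw).trans_lt hlt
  have hgood : ∀ t < n, s j ≤ s (j + t) := fun t ht ↦ by
    by_cases h : j + t < n
    · exact hjmin _ h
    · have := hs (j + t - n)
      rw [show j + t - n + n = j + t by omega] at this
      have := hstrict (j + t - n) (by omega)
      omega
  have hlt (a b : ℕ) (hab : a < b) (hbn : b < n) (ha : ∀ t < n, s a ≤ s (a + t))
      (hb : ∀ t < n, s b ≤ s (b + t)) : False := by
    have h₁ := ha (b - a) (by omega)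
    have h₂ := hb (a + n - b) (by omega)
    rw [show a + (b - a) = b by omega] at h₁
    rw [show b + (a + n - b) = a + n by omega, hs] at h₂
    omega
  refine ⟨j, ⟨hjn, hgood⟩, fun j' ⟨hj', hj'good⟩ ↦ ?_⟩
  rcases lt_trichotomy j' j with h | h | h
  · exact (hlt _ _ h hjn hj'good hgood).elim
  · exact h
  · exact (hlt _ _ h hj' hgood hj'good).elim

open Fin.NatCast

variable {m : ℕ}

def rotate (j : Fin (m + 1)) (f : Fin (m + 1) → ℕ) : Fin (m + 1) → ℕ := fun i ↦ f (i + j)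

lemma sum_rotate (j : Fin (m + 1)) (f : Fin (m + 1) → ℕ) : ∑ i, rotate j f i = ∑ i, f i :=
  Equiv.sum_comp (Equiv.addRight j) f

lemma weight_rotate (ν : ℕ → ℝ≥0∞) (j : Fin (m + 1)) (f : Fin (m + 1) → ℕ) :
    weight ν (rotate j f) = weight ν f :=
  Equiv.prod_comp (Equiv.addRight j) fun i ↦ ν (f i)

/-- The cast `(i : Fin (m + 1))` reduces `i` mod `m + 1`: this is the walk of the periodic
extension of `f`. -/
def cyclicWalk (f : Fin (m + 1) → ℕ) (t : ℕ) : ℤ := ∑ i ∈ range t, (f i : ℤ) - t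

lemma sum_range_apply_natCast_add (f : Fin (m + 1) → ℕ) (t : ℕ) :
    ∑ i ∈ range (m + 1), (f ((t + i : ℕ) : Fin (m + 1)) : ℤ) = ∑ i, (f i : ℤ) := by
  rw [Finset.sum_range]
  simp only [Nat.cast_add, Fin.cast_val_eq_self]
  exact Equiv.sum_comp (Equiv.addLeft (t : Fin (m + 1))) fun i ↦ (f i : ℤ)

lemma cyclicWalk_add_period {f : Fin (m + 1) → ℕ} (hf : ∑ i, f i = m) (t : ℕ) :
    cyclicWalk f (t + (m + 1)) = cyclicWalk f t - 1 := by
  have : ∑ i, (f i : ℤ) = m := by exact_mod_cast hf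
  rw [cyclicWalk, cyclicWalk, sum_range_add, sum_range_apply_natCast_add, this]
  push_cast
  ring

lemma partialSum_eq_sum_range (g : Fin (m + 1) → ℕ) {t : ℕ} (ht : t ≤ m + 1) :
    partialSum g t = ∑ i ∈ range t, g i := by
  have := Fin.sum_univ_eq_sum_range (fun i : ℕ ↦ if i < t then g i else 0) (m + 1)
  simp only [Fin.cast_val_eq_self] at this
  rw [partialSum, this, ← sum_filter]
  congr 1
  ext i
  simp only [mem_filter, mem_range]
  omega

lemma partialSum_rotate (f : Fin (m + 1) → ℕ) (j : Fin (m + 1)) {t : ℕ} (ht : t ≤ m + 1) :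
    (partialSum (rotate j f) t : ℤ) = cyclicWalk f (j + t) - cyclicWalk f j + t := by
  simp only [partialSum_eq_sum_range _ ht, rotate, cyclicWalk, sum_range_add, Nat.cast_add,
    Fin.cast_val_eq_self, add_comm (j : Fin (m + 1))]
  push_cast
  ring

lemma isFirstPassage_rotate_iff {f : Fin (m + 1) → ℕ} (hf : ∑ i, f i = m) (j : Fin (m + 1)) :
    IsFirstPassage (rotate j f) ↔ ∀ t < m + 1, cyclicWalk f j ≤ cyclicWalk f (j + t) := by
  have htotal : partialSum (rotate j f) (m + 1) + 1 = m + 1 := by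
    rw [partialSum_self, sum_rotate, hf]
  refine (and_iff_left htotal).trans (forall₂_congr fun t ht ↦ ?_)
  have := partialSum_rotate f j ht.le
  omega

lemma existsUnique_isFirstPassage_rotate {f : Fin (m + 1) → ℕ} (hf : ∑ i, f i = m) :
    ∃! j : Fin (m + 1), IsFirstPassage (rotate j f) := by
  obtain ⟨j, ⟨hj, hjgood⟩, huniq⟩ := cycle_lemma _ m.succ_pos (cyclicWalk_add_period hf)
  refine ⟨⟨j, hj⟩, (isFirstPassage_rotate_iff hf _).mpr hjgood, fun j' hj' ↦ Fin.ext ?_⟩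
  exact huniq j' ⟨j'.isLt, (isFirstPassage_rotate_iff hf j').mp hj'⟩

end Cycle

section Survival

/-! When `weight ν` is the law of i.i.d. steps and `T` the hitting time of `-1`, these are
`P(T > J)`, `P(T = m)` and `E[W_J; T > J]`. -/

variable (ν : ℕ → ℝ≥0∞)

noncomputable def survival (J : ℕ) : ℝ≥0∞ :=
  ∑' f : Fin J → ℕ, if StaysNonneg f then weight ν f else 0

noncomputable def firstPassage (m : ℕ) : ℝ≥0∞ :=
  ∑' f : Fin m → ℕ, if IsFirstPassage f then weight ν f else 0

noncomputable def survivalHeight (J : ℕ) : ℝ≥0∞ :=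
  ∑' f : Fin J → ℕ, if StaysNonneg f then weight ν f * (partialSum f J - J : ℕ) else 0

variable {ν}

/-- Kemperman's formula `μ^{*(m+1)}(m) = (m + 1) P(T = m + 1)`, from the cycle lemma. -/
lemma tsum_weight_of_sum_eq_eq_mul_firstPassage (m : ℕ) :
    ∑' f : Fin (m + 1) → ℕ, (if ∑ i, f i = m then weight ν f else 0) =
      (m + 1) * firstPassage ν (m + 1) := by
  have hcount (f : Fin (m + 1) → ℕ) : (if ∑ i, f i = m then weight ν f else 0) =
      ∑ j : Fin (m + 1), if IsFirstPassage (rotate j f) then weight ν (rotate j f) else 0 := by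
    simp only [weight_rotate]
    split_ifs with hf
    · obtain ⟨j, hj, huniq⟩ := existsUnique_isFirstPassage_rotate hf
      rw [Fintype.sum_eq_single j fun j' hj' ↦ if_neg fun h ↦ hj' (huniq j' h), if_pos hj]
    · refine (Fintype.sum_eq_zero _ fun j ↦ if_neg fun h ↦ hf ?_).symm
      have := h.2
      rwa [partialSum_self, sum_rotate, Nat.add_right_cancel_iff] at this
  have hrot (j : Fin (m + 1)) : ∑' f : Fin (m + 1) → ℕ,
      (if IsFirstPassage (rotate j f) then weight ν (rotate j f) else 0) =
        firstPassage ν (m + 1) :=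
    ((Equiv.addRight j).symm.arrowCongr (Equiv.refl ℕ)).tsum_eq
      fun f ↦ if IsFirstPassage f then weight ν f else 0
  simp only [hcount, Summable.tsum_finsetSum fun _ _ ↦ ENNReal.summable, hrot, sum_const,
    card_univ, Fintype.card_fin, nsmul_eq_mul, Nat.cast_add_one]

lemma survival_zero : survival ν 0 = 1 := by
  have h0 (f : Fin 0 → ℕ) : StaysNonneg f := fun t ht ↦ by simp_all
  simp [survival, h0, weight]

lemma survivalHeight_zero : survivalHeight ν 0 = 0 := by
  simp [survivalHeight, partialSum]

lemma survival_eq_survival_succ_add_firstPassage (hν : ∑' k, ν k = 1) (J : ℕ) :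
    survival ν J = survival ν (J + 1) + firstPassage ν (J + 1) := by
  have key (g : Fin J → ℕ) (x : ℕ) :
      (if StaysNonneg g then weight ν g else 0) * ν x =
        (if StaysNonneg (Fin.snoc g x) then weight ν (Fin.snoc g x) else 0) +
          if IsFirstPassage (Fin.snoc g x) then weight ν (Fin.snoc g x) else 0 := by
    rw [staysNonneg_snoc_iff, isFirstPassage_snoc_iff, weight_snoc]
    by_cases hg : StaysNonneg g
    · have := hg J le_rfl
      by_cases hx : J + 1 ≤ partialSum g J + x
      · rw [if_pos hg, if_pos ⟨hg, hx⟩, if_neg (by omega), add_zero]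
      · rw [if_pos hg, if_neg (by omega), if_pos ⟨hg, by omega⟩, zero_add]
    · simp [hg]
  rw [survival, survival, firstPassage, ← ENNReal.tsum_add, tsum_snoc]
  simp only [← key, ENNReal.tsum_mul_left, hν, mul_one]

lemma survivalHeight_succ_add_survival_succ (hν : ∑' k, ν k = 1) {c : ℝ≥0∞}
    (hc : ∑' k : ℕ, k * ν k = c) (J : ℕ) :
    survivalHeight ν (J + 1) + survival ν (J + 1) = survivalHeight ν J + c * survival ν J := by
  have key (g : Fin J → ℕ) (x : ℕ) :
      ((if StaysNonneg (Fin.snoc g x) then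
          weight ν (Fin.snoc g x) * (partialSum (Fin.snoc g x) (J + 1) - (J + 1) : ℕ) else 0) +
        if StaysNonneg (Fin.snoc g x) then weight ν (Fin.snoc g x) else 0) =
        if StaysNonneg g then weight ν g * ν x * (partialSum g J - J + x : ℕ) else 0 := by
    rw [staysNonneg_snoc_iff, weight_snoc, partialSum_snoc_succ]
    by_cases hg : StaysNonneg g
    · have := hg J le_rfl
      by_cases hx : J + 1 ≤ partialSum g J + x
      · rw [if_pos ⟨hg, hx⟩, if_pos ⟨hg, hx⟩, if_pos hg,
          show partialSum g J - J + x = partialSum g J + x - (J + 1) + 1 by omega]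
        push_cast
        ring
      · rw [if_neg (by tauto), if_neg (by tauto), if_pos hg,
          show partialSum g J - J + x = 0 by omega]
        simp
    · simp [hg]
  have hsum (a : ℕ) (P : Prop) (w : ℝ≥0∞) :
      ∑' x : ℕ, (if P then w * ν x * (a + x : ℕ) else 0) = if P then w * (a + c) else 0 := by
    split_ifs
    · simp only [Nat.cast_add, mul_assoc, ENNReal.tsum_mul_left, mul_add, ENNReal.tsum_add,
        hν, mul_one, mul_comm (ν _), hc]
    · simp
  rw [survivalHeight, survival, ← ENNReal.tsum_add, tsum_snoc]
  simp only [key, hsum, survivalHeight, survival, ← ENNReal.tsum_mul_left, ← ENNReal.tsum_add]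
  exact tsum_congr fun g ↦ by split_ifs <;> ring

lemma survivalHeight_add_survival_add_mul_sum (hν : ∑' k, ν k = 1) {c d : ℝ≥0∞}
    (hc : ∑' k : ℕ, k * ν k = c) (hcd : c + d = 1) (J : ℕ) :
    survivalHeight ν J + survival ν J + d * ∑ j ∈ range J, survival ν j = 1 := by
  induction J with
  | zero => simp [survivalHeight_zero, survival_zero]
  | succ J ih =>
    calc _ = survivalHeight ν J + (c + d) * survival ν J + d * ∑ j ∈ range J, survival ν j := by
          rw [survivalHeight_succ_add_survival_succ hν hc, sum_range_succ]
          ring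
      _ = 1 := by rw [hcd, one_mul, ih]

lemma tsum_staysNonneg_mul_apply_le_mul_survival (hν : ∑' k, ν k = 1) {c : ℝ≥0∞}
    (hc : ∑' k : ℕ, k * ν k = c) {i J : ℕ} (hi : i < J) :
    ∑' f : Fin J → ℕ, (if StaysNonneg f then weight ν f * f ⟨i, hi⟩ else 0) ≤
      c * survival ν i := by
  induction J with
  | zero => omega
  | succ J ih =>
    have hmono (g : Fin J → ℕ) (x : ℕ) (a : ℝ≥0∞) :
        (if StaysNonneg (Fin.snoc g x) then a else 0) ≤ if StaysNonneg g then a else 0 := by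
      by_cases h : StaysNonneg (Fin.snoc g x)
      · rw [if_pos h, if_pos ((staysNonneg_snoc_iff g x).mp h).1]
      · rw [if_neg h]
        exact zero_le
    rw [tsum_snoc]
    obtain rfl | hiJ := (Nat.lt_succ_iff.mp hi).eq_or_lt
    · calc _ ≤ ∑' (g : Fin i → ℕ) (x : ℕ),
              (if StaysNonneg g then weight ν g else 0) * (x * ν x) :=
            ENNReal.tsum_le_tsum fun g ↦ ENNReal.tsum_le_tsum fun x ↦ by
              rw [show (⟨i, hi⟩ : Fin (i + 1)) = Fin.last i from rfl, Fin.snoc_last, weight_snoc,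
                ite_mul, zero_mul]
              exact (hmono g x _).trans_eq (by split_ifs <;> ring)
        _ = c * survival ν i := by
          simp only [ENNReal.tsum_mul_left, hc, ENNReal.tsum_mul_right, survival]
          exact mul_comm _ _
    · calc _ ≤ ∑' (g : Fin J → ℕ) (x : ℕ),
              (if StaysNonneg g then weight ν g * g ⟨i, hiJ⟩ else 0) * ν x :=
            ENNReal.tsum_le_tsum fun g ↦ ENNReal.tsum_le_tsum fun x ↦ by
              rw [show (⟨i, hi⟩ : Fin (J + 1)) = Fin.castSucc ⟨i, hiJ⟩ from rfl,
                Fin.snoc_castSucc, weight_snoc, ite_mul, zero_mul]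
              exact (hmono g x _).trans_eq (by split_ifs <;> ring)
        _ ≤ c * survival ν i := by
          simpa only [ENNReal.tsum_mul_left, hν, mul_one] using ih hiJ

lemma tsum_staysNonneg_mul_apply_le_add_tail (hν : ∑' k, ν k = 1) {J : ℕ} (i : Fin J) (M : ℕ) :
    ∑' f : Fin J → ℕ, (if StaysNonneg f then weight ν f * f i else 0) ≤
      M * survival ν J + ∑' k, (k + M : ℕ) * ν (k + M) := by
  have hsplit (x : ℕ) : (x : ℝ≥0∞) ≤ M + if M ≤ x then (x : ℝ≥0∞) else 0 := by
    split_ifs with h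
    · exact le_add_self
    · exact le_add_right (Nat.cast_le.mpr (by omega))
  calc _ ≤ ∑' f : Fin J → ℕ, ((if StaysNonneg f then weight ν f * M else 0) +
          weight ν f * if M ≤ f i then (f i : ℝ≥0∞) else 0) :=
        ENNReal.tsum_le_tsum fun f ↦ by
          by_cases hf : StaysNonneg f
          · rw [if_pos hf, if_pos hf, ← mul_add]
            exact mul_le_mul_right (hsplit _) _
          · rw [if_neg hf, if_neg hf, zero_add]
            exact zero_le
    _ = M * survival ν J + ∑' k, (k + M : ℕ) * ν (k + M) := by
      have htail : ∑' x, ν x * (if M ≤ x then (x : ℝ≥0∞) else 0) =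
          ∑' k, (k + M : ℕ) * ν (k + M) := by
        rw [← ENNReal.tsum_ite_le_eq_tsum_add fun x ↦ x * ν x]
        exact tsum_congr fun x ↦ by split_ifs <;> simp [mul_comm]
      rw [ENNReal.tsum_add, tsum_weight_mul_apply hν i fun x ↦ if M ≤ x then (x : ℝ≥0∞) else 0,
        htail, survival, ← ENNReal.tsum_mul_left]
      simp only [mul_comm (M : ℝ≥0∞), ite_mul, zero_mul]

lemma survivalHeight_le (hν : ∑' k, ν k = 1) {c : ℝ≥0∞} (hc : ∑' k : ℕ, k * ν k = c)
    {K J : ℕ} (hKJ : K ≤ J) (M : ℕ) :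
    survivalHeight ν J ≤ K * (M * survival ν J + ∑' k, (k + M : ℕ) * ν (k + M)) +
      c * ∑' k, survival ν (k + K) := by
  set A := M * survival ν J + ∑' k, (k + M : ℕ) * ν (k + M)
  have hheight : survivalHeight ν J ≤
      ∑ i : Fin J, ∑' f : Fin J → ℕ, (if StaysNonneg f then weight ν f * f i else 0) := by
    rw [← Summable.tsum_finsetSum fun _ _ ↦ ENNReal.summable]
    refine ENNReal.tsum_le_tsum fun f ↦ ?_
    split_ifs
    · rw [← mul_sum, ← Nat.cast_sum, ← partialSum_self]
      gcongr
      exact Nat.sub_le _ _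
    · simp
  have hcoord (i : Fin J) :
      ∑' f : Fin J → ℕ, (if StaysNonneg f then weight ν f * f i else 0) ≤
        if (i : ℕ) < K then A else c * survival ν i := by
    split_ifs
    · exact tsum_staysNonneg_mul_apply_le_add_tail hν i M
    · exact tsum_staysNonneg_mul_apply_le_mul_survival hν hc i.isLt
  calc survivalHeight ν J ≤ ∑ i ∈ range J, if i < K then A else c * survival ν i :=
        hheight.trans ((sum_le_sum fun i _ ↦ hcoord i).trans_eq
          (Fin.sum_univ_eq_sum_range (fun i ↦ if i < K then A else c * survival ν i) J))
    _ = K * A + c * ∑ k ∈ range (J - K), survival ν (K + k) := by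
      rw [← sum_range_add_sum_Ico _ hKJ, sum_Ico_eq_sum_range, mul_sum,
        sum_congr rfl fun i hi ↦ if_pos (mem_range.mp hi),
        sum_congr rfl fun k _ ↦ if_neg (by omega)]
      simp
    _ ≤ K * A + c * ∑' k, survival ν (k + K) := by
      simp only [add_comm K]
      gcongr
      exact ENNReal.sum_le_tsum _

lemma mul_tsum_survival_le_one (hν : ∑' k, ν k = 1) {c d : ℝ≥0∞}
    (hc : ∑' k : ℕ, k * ν k = c) (hcd : c + d = 1) : d * ∑' J, survival ν J ≤ 1 := by
  rw [ENNReal.tsum_eq_iSup_nat, ENNReal.mul_iSup]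
  exact iSup_le fun J ↦ le_add_self.trans_eq
    (survivalHeight_add_survival_add_mul_sum hν hc hcd J)

lemma one_le_add_mul_tsum_survival (hν : ∑' k, ν k = 1) {c d : ℝ≥0∞}
    (hc : ∑' k : ℕ, k * ν k = c) (hcd : c + d = 1) (hq : Tendsto (survival ν) atTop (𝓝 0))
    (K M : ℕ) :
    1 ≤ K * ∑' k, (k + M : ℕ) * ν (k + M) + c * ∑' k, survival ν (k + K) +
      d * ∑' J, survival ν J := by
  set T := ∑' k, (k + M : ℕ) * ν (k + M)
  have hlim : Tendsto (fun J ↦ K * (M * survival ν J + T) + c * ∑' k, survival ν (k + K) +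
      survival ν J + d * ∑' J, survival ν J) atTop
      (𝓝 (K * (M * 0 + T) + c * ∑' k, survival ν (k + K) + 0 + d * ∑' J, survival ν J)) := by
    have hA := (ENNReal.Tendsto.const_mul hq (Or.inr (ENNReal.natCast_ne_top M))).add_const T
    exact (((ENNReal.Tendsto.const_mul hA (Or.inr (ENNReal.natCast_ne_top K))).add_const _).add
      hq).add_const _
  simp only [mul_zero, zero_add, add_zero] at hlim
  refine ge_of_tendsto hlim ((eventually_ge_atTop K).mono fun J hJ ↦ ?_)
  refine (survivalHeight_add_survival_add_mul_sum hν hc hcd J).ge.trans ?_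
  gcongr
  · exact survivalHeight_le hν hc hJ M
  · exact ENNReal.sum_le_tsum _

theorem tsum_survival (hν : ∑' k, ν k = 1) {c : ℝ≥0∞} (hc : ∑' k : ℕ, k * ν k = c)
    (hc1 : c < 1) : ∑' J, survival ν J = (1 - c)⁻¹ := by
  set Q := ∑' J, survival ν J
  have hcd : c + (1 - c) = 1 := add_tsub_cancel_of_le hc1.le
  have hle : (1 - c) * Q ≤ 1 := mul_tsum_survival_le_one hν hc hcd
  have hQ : Q ≠ ∞ := fun h ↦ by simp [h, ENNReal.mul_top (tsub_pos_of_lt hc1).ne'] at hle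
  have hq := ENNReal.tendsto_atTop_zero_of_tsum_ne_top hQ
  -- let first the truncation level `M`, then the splitting time `K` tend to infinity
  have hM (K : ℕ) : 1 ≤ c * ∑' k, survival ν (k + K) + (1 - c) * Q := by
    have hlim := ((ENNReal.Tendsto.const_mul
      (ENNReal.tendsto_sum_nat_add (fun x ↦ (x : ℝ≥0∞) * ν x) (hc ▸ hc1.ne_top))
      (Or.inr (ENNReal.natCast_ne_top K))).add_const (c * ∑' k, survival ν (k + K))).add_const
      ((1 - c) * Q)
    simp only [mul_zero, zero_add] at hlim
    exact ge_of_tendsto hlim (Eventually.of_forall (one_le_add_mul_tsum_survival hν hc hcd hq K))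
  have hlim := (ENNReal.Tendsto.const_mul (ENNReal.tendsto_sum_nat_add _ hQ)
    (Or.inr hc1.ne_top)).add_const ((1 - c) * Q)
  simp only [mul_zero, zero_add] at hlim
  have hge : 1 ≤ (1 - c) * Q := ge_of_tendsto hlim (Eventually.of_forall hM)
  exact ENNReal.eq_inv_of_mul_eq_one_left ((mul_comm _ _).trans (le_antisymm hle hge))

theorem tsum_tsum_weight_of_sum_eq (hν : ∑' k, ν k = 1) {c : ℝ≥0∞} (hc : ∑' k : ℕ, k * ν k = c)
    (hc1 : c < 1) :
    ∑' m : ℕ, ∑' f : Fin (m + 1) → ℕ, (if ∑ i, f i = m then weight ν f else 0) = (1 - c)⁻¹ := by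
  have hQ := tsum_survival hν hc hc1
  have hq : Tendsto (survival ν) atTop (𝓝 0) := ENNReal.tendsto_atTop_zero_of_tsum_ne_top <| by
    rw [hQ]
    exact ENNReal.inv_ne_top.mpr (tsub_pos_of_lt hc1).ne'
  simp only [tsum_weight_of_sum_eq_eq_mul_firstPassage, ← hQ,
    ENNReal.eq_tsum_of_eq_add_succ (survival_eq_survival_succ_add_firstPassage hν) hq]
  exact (ENNReal.tsum_tsum_add_eq_tsum_succ_mul fun n ↦ firstPassage ν (n + 1)).symm

end Survival

end SkipFreeWalk

open SkipFreeWalk in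
theorem stmt_10 (D : ℝ) (hD : 0 < D)
    (μ : ℕ → ℝ) (hnn : ∀ a, 0 ≤ μ a) (hprob : ∑' a : ℕ, μ a = 1)
    (hsummean : Summable fun a : ℕ => (a : ℝ) * μ a)
    (hmean : ∑' a : ℕ, (a : ℝ) * μ a = 1 - D) :
    ∑' m : ℕ, convPow μ (m + 1) m = 1 / D := by
  have hsum : Summable μ := by
    by_contra h
    simp [tsum_eq_zero_of_not_summable h] at hprob
  have hν : ∑' k, ENNReal.ofReal (μ k) = 1 := by
    rw [← ENNReal.ofReal_tsum_of_nonneg hnn hsum, hprob, ENNReal.ofReal_one]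
  have hc : ∑' k : ℕ, k * ENNReal.ofReal (μ k) = ENNReal.ofReal (1 - D) := by
    simp_rw [← ENNReal.ofReal_natCast, ← ENNReal.ofReal_mul (Nat.cast_nonneg _)]
    rw [← ENNReal.ofReal_tsum_of_nonneg (fun k ↦ mul_nonneg k.cast_nonneg (hnn k)) hsummean, hmean]
  have hD1 : 0 ≤ 1 - D := hmean ▸ tsum_nonneg fun k ↦ mul_nonneg k.cast_nonneg (hnn k)
  have hmain := tsum_tsum_weight_of_sum_eq hν hc (ENNReal.ofReal_lt_one.mpr (by linarith))
  rw [← ENNReal.ofReal_one, ← ENNReal.ofReal_sub _ hD1, sub_sub_cancel,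
    ← ENNReal.ofReal_inv_of_pos hD] at hmain
  simp only [← ofReal_convPow hnn] at hmain
  rw [one_div, ← ENNReal.toReal_ofReal (inv_nonneg.mpr hD.le), ← hmain,
    ENNReal.tsum_toReal_eq fun _ ↦ ENNReal.ofReal_ne_top]
  exact tsum_congr fun m ↦ (ENNReal.toReal_ofReal (convPow_nonneg hnn _ _)).symm
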